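/- Let (E,𝓛,Ē^{0,-}) be a weakly left-resolving and strongly cofinal labelled space satisfying the standing assumptions, such that {w} ∈ Ē^{0,-} for every w ∈ E^0. If [v]_l is not disagreeable for some v ∈ E^0 and l ≥ 1, then |r({v},α)| = 1 for every α ∈ 𝓛(vE^{≥1}), i.e., every labelled path with source v has a singleton relative range from {v}. -/

import Mathlib

open scoped BigOperators

/-- The `n`-fold concatenation power of a word. -/
def wpow {A : Type*} (β : List A) : ℕ → List A
  | 0 => []
  | n + 1 => β ++ wpow β n

/-- A word is simple if it is not a power of a strictly shorter word. -/
def SimpleWord {A : Type*} (β : List A) : Prop :=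
  β ≠ [] ∧ ¬ ∃ (δ : List A) (n : ℕ), δ ≠ [] ∧ δ.length < β.length ∧ 1 ≤ n ∧ β = wpow δ n

/-- The initial segment `x_{[1,N]}` of an infinite word. -/
def finTake {A : Type*} (x : ℕ → A) (N : ℕ) : List A := List.ofFn (fun i : Fin N => x i)

/-- `x = β^∞`, the periodic infinite word with period `β`. -/
def isPowInf {A : Type*} (β : List A) (x : ℕ → A) : Prop :=
  ∃ h : β ≠ [], ∀ n : ℕ,
    x n = β.get ⟨n % β.length, Nat.mod_lt n (List.length_pos_iff.mpr h)⟩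

/-- A labelled graph: a directed graph together with a surjective labelling of edges. -/
structure LabelledGraph (V : Type*) (Ed : Type*) (A : Type*) where
  src : Ed → V
  rng : Ed → V
  lbl : Ed → A
  lbl_surj : Function.Surjective lbl

/-- A finite path (of length ≥ 1) in a directed graph. -/
structure LabelledGraph.GPath {V Ed A : Type*} (G : LabelledGraph V Ed A) where
  edges : List Ed
  ne : edges ≠ []
  chain : edges.Chain' (fun e f => G.rng e = G.src f)

/-- An infinite path in a directed graph. -/
structure LabelledGraph.GInfPath {V Ed A : Type*} (G : LabelledGraph V Ed A) where
  edges : ℕ → Ed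
  chain : ∀ n, G.rng (edges n) = G.src (edges (n + 1))

namespace LabelledGraph

variable {V Ed A : Type*}

def GPath.src {G : LabelledGraph V Ed A} (p : G.GPath) : V := G.src (p.edges.head p.ne)

def GPath.rng {G : LabelledGraph V Ed A} (p : G.GPath) : V := G.rng (p.edges.getLast p.ne)

def GPath.label {G : LabelledGraph V Ed A} (p : G.GPath) : List A := p.edges.map G.lbl

def GPath.len {G : LabelledGraph V Ed A} (p : G.GPath) : ℕ := p.edges.length

def GInfPath.src {G : LabelledGraph V Ed A} (q : G.GInfPath) : V := G.src (q.edges 0)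

def GInfPath.label {G : LabelledGraph V Ed A} (q : G.GInfPath) : ℕ → A :=
  fun n => G.lbl (q.edges n)

variable (G : LabelledGraph V Ed A)

/-- `α ∈ 𝓛(E^{≥1})`: `α` is the label of some finite path. -/
def IsLabelled (α : List A) : Prop := ∃ p : G.GPath, p.label = α

/-- `s(α)`, the set of sources of paths labelled `α`. -/
def srcSet (α : List A) : Set V := { v | ∃ p : G.GPath, p.label = α ∧ p.src = v }

/-- `r(α)`, the set of ranges of paths labelled `α`. -/
def rngSet (α : List A) : Set V := { v | ∃ p : G.GPath, p.label = α ∧ p.rng = v }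

/-- The relative range `r(S,α)` of `α` with respect to `S`. -/
def relRange (S : Set V) (α : List A) : Set V :=
  { v | ∃ p : G.GPath, p.label = α ∧ p.src ∈ S ∧ p.rng = v }

/-- `x ∈ 𝓛(E^∞)`: the infinite word `x` is the label of some infinite path. -/
def IsInfLabelled (x : ℕ → A) : Prop := ∃ q : G.GInfPath, q.label = x

/-- `s(x)` for an infinite labelled path `x`. -/
def infSrc (x : ℕ → A) : Set V := { v | ∃ q : G.GInfPath, q.label = x ∧ q.src = v }

/-- `𝓛(SE^1)`: labels of edges with source in `S`. -/
def labelsFrom (S : Set V) : Set A := { a | ∃ e : Ed, G.src e ∈ S ∧ G.lbl e = a }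

/-- `𝓛(E^1S)`: labels of edges with range in `S`. -/
def labelsInto (S : Set V) : Set A := { a | ∃ e : Ed, G.rng e ∈ S ∧ G.lbl e = a }

/-- `𝓛(SE^n)`: labels of paths of length `n` with source in `S`. -/
def nLabelsFrom (S : Set V) (n : ℕ) : Set (List A) :=
  { α | ∃ p : G.GPath, p.label = α ∧ p.src ∈ S ∧ p.len = n }

/-- `𝓛(E^{≤l}v)`: labels of paths of length at most `l` with range `v`. -/
def labelsToVtx (l : ℕ) (v : V) : Set (List A) :=
  { α | ∃ p : G.GPath, p.label = α ∧ p.len ≤ l ∧ p.rng = v }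

/-- The generalized vertex `[v]_l`. -/
def genVertex (l : ℕ) (v : V) : Set V := { w | G.labelsToVtx l w = G.labelsToVtx l v }

/-- `Ē^{0,-}`: the collection of all finite unions of generalized vertices. -/
def barE : Set (Set V) :=
  { S | ∃ (l : ℕ) (F : Finset V), 1 ≤ l ∧ S = ⋃ v ∈ F, G.genVertex l v }

/-- An accommodating set for `(E,𝓛)`. -/
structure Accommodating (B : Set (Set V)) : Prop where
  empty_mem : ∅ ∈ B
  relRange_mem : ∀ S ∈ B, ∀ α : List A, G.IsLabelled α → G.relRange S α ∈ B
  inter_mem : ∀ S ∈ B, ∀ T ∈ B, S ∩ T ∈ B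
  union_mem : ∀ S ∈ B, ∀ T ∈ B, S ∪ T ∈ B
  rng_mem : ∀ α : List A, G.IsLabelled α → G.rngSet α ∈ B

/-- `𝓔^{0,-}`: the smallest accommodating set for `(E,𝓛)`. -/
def smallestAcc : Set (Set V) :=
  { S | ∀ B : Set (Set V), G.Accommodating B → S ∈ B }

/-- The labelled space `(E,𝓛,B)` is weakly left-resolving. -/
def WeaklyLeftResolving (B : Set (Set V)) : Prop :=
  ∀ S ∈ B, ∀ T ∈ B, ∀ α : List A, G.IsLabelled α →
    G.relRange S α ∩ G.relRange T α = G.relRange (S ∩ T) α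

/-- Standing assumptions: no sinks, set-finite, receiver set-finite, and
edges are determined by source, range and label. -/
structure StandingAssumptions (B : Set (Set V)) : Prop where
  no_sinks : ∀ v : V, ∃ e : Ed, G.src e = v
  set_finite : ∀ S ∈ B, (G.labelsFrom S).Finite
  receiver_set_finite : ∀ S ∈ B, (G.labelsInto S).Finite
  edge_eq : ∀ e f : Ed, G.src e = G.src f → G.rng e = G.rng f → G.lbl e = G.lbl f → e = f

/-- `(E,𝓛,B)` is strongly cofinal. -/
def StronglyCofinal : Prop :=
  ∀ x : ℕ → A, G.IsInfLabelled x → ∀ l : ℕ, 1 ≤ l → ∀ v : V, ∀ w ∈ G.infSrc x,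
    ∃ N : ℕ, 1 ≤ N ∧ ∃ (m : ℕ) (lds : Fin m → List A),
      (∀ i, G.IsLabelled (lds i)) ∧
      G.relRange (G.genVertex 1 w) (finTake x N) ⊆ ⋃ i, G.relRange (G.genVertex l v) (lds i)

/-- `(E,𝓛,B)` is `l`-cofinal. -/
def LCofinal (l : ℕ) : Prop :=
  ∀ x : ℕ → A, G.IsInfLabelled x → ∀ v : V, ∀ w ∈ G.infSrc x,
    ∃ d : ℕ, l ≤ d ∧ ∃ N : ℕ, 1 ≤ N ∧ ∃ (m : ℕ) (lds : Fin m → List A),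
      (∀ i, G.IsLabelled (lds i)) ∧
      G.relRange (G.genVertex d w) (finTake x N) ⊆ ⋃ i, G.relRange (G.genVertex l v) (lds i)

/-- `(E,𝓛,B)` is cofinal: `l`-cofinal for all `l ≥ L`, for some `L > 0`. -/
def Cofinal : Prop := ∃ L : ℕ, 0 < L ∧ ∀ l : ℕ, L ≤ l → G.LCofinal l

/-- `α` is agreeable for `[v]_l` (the condition only involves `l`):
`α = βα' = α'γ` with `|β| = |γ| ≤ l`. -/
def Agreeable (l : ℕ) (α : List A) : Prop :=
  ∃ β α' γ : List A, G.IsLabelled β ∧ G.IsLabelled α' ∧ G.IsLabelled γ ∧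
    β.length = γ.length ∧ β.length ≤ l ∧ α = β ++ α' ∧ α = α' ++ γ

/-- `α` (a labelled path with `s(α) ∩ [v]_l ≠ ∅`) is disagreeable for `[v]_l`. -/
def DisagreeablePath (l : ℕ) (v : V) (α : List A) : Prop :=
  G.IsLabelled α ∧ (G.srcSet α ∩ G.genVertex l v).Nonempty ∧ ¬ G.Agreeable l α

/-- The generalized vertex `[v]_l` is disagreeable. -/
def DisagreeableVtx (l : ℕ) (v : V) : Prop :=
  ∃ N : ℕ, 0 < N ∧ ∀ n : ℕ, N < n →
    ∃ α : List A, n ≤ α.length ∧ G.DisagreeablePath l v α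

/-- The labelled space is disagreeable. -/
def DisagreeableSpace : Prop :=
  ∀ v : V, ∃ L : ℕ, 0 < L ∧ ∀ l : ℕ, L < l → G.DisagreeableVtx l v

/-- A representation of the labelled space `(E,𝓛,B)` in a C*-algebra `𝔄`. -/
structure Rep (B : Set (Set V)) (𝔄 : Type*) [NonUnitalCStarAlgebra 𝔄] where
  p : Set V → 𝔄
  s : A → 𝔄
  p_empty : p ∅ = 0
  p_proj : ∀ S ∈ B, star (p S) = p S ∧ p S * p S = p S
  s_pisom : ∀ a : A, s a * star (s a) * s a = s a
  p_inter : ∀ S ∈ B, ∀ T ∈ B, p (S ∩ T) = p S * p T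
  p_union : ∀ S ∈ B, ∀ T ∈ B, p (S ∪ T) = p S + p T - p (S ∩ T)
  p_s : ∀ S ∈ B, ∀ a : A, p S * s a = s a * p (G.relRange S [a])
  s_star_s : ∀ a : A, star (s a) * s a = p (G.rngSet [a])
  s_orth : ∀ a b : A, a ≠ b → star (s a) * s b = 0
  p_sum : ∀ S ∈ B, ∀ h : (G.labelsFrom S).Finite, (G.labelsFrom S).Nonempty →
    p S = ∑ a ∈ h.toFinset, s a * p (G.relRange S [a]) * star (s a)

variable {G}

/-- `s_α = s_{α_1} ⋯ s_{α_n}` for a word `α`. -/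
def Rep.sWord {B : Set (Set V)} {𝔄 : Type*} [NonUnitalCStarAlgebra 𝔄]
    (ρ : G.Rep B 𝔄) : List A → 𝔄
  | [] => 0
  | a :: rest => rest.foldl (fun x b => x * ρ.s b) (ρ.s a)

/-- The C*-algebra `𝔄` is generated by the representation `ρ`. -/
def Rep.Generates {B : Set (Set V)} {𝔄 : Type*} [NonUnitalCStarAlgebra 𝔄]
    (ρ : G.Rep B 𝔄) : Prop :=
  closure (↑(NonUnitalStarAlgebra.adjoin ℂ
    (Set.range ρ.s ∪ ρ.p '' B)) : Set 𝔄) = Set.univ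

/-- The representation `ρ` is universal. -/
def Rep.Universal {B : Set (Set V)} {𝔄 : Type*} [NonUnitalCStarAlgebra 𝔄]
    (ρ : G.Rep B 𝔄) : Prop :=
  ∀ (C : Type*) [NonUnitalCStarAlgebra C], ∀ ρ' : G.Rep B C,
    ∃ φ : 𝔄 →⋆ₙₐ[ℂ] C, (∀ a : A, φ (ρ.s a) = ρ'.s a) ∧ ∀ S ∈ B, φ (ρ.p S) = ρ'.p S

end LabelledGraph

/-- A C*-algebra is simple if its only closed two-sided ideals are `{0}` and the
whole algebra. -/
def IsSimpleCStarAlgebra (𝔄 : Type*) [NonUnitalCStarAlgebra 𝔄] : Prop :=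
  ∀ I : TwoSidedIdeal 𝔄, IsClosed (I : Set 𝔄) →
    (I : Set 𝔄) = {0} ∨ (I : Set 𝔄) = Set.univ

/-!
Since `[v]_l` is not disagreeable, every long labelled path from `v` is agreeable and so has a
period between `1` and `l`; hence every infinite path leaving a vertex reachable from `v` has an
`l!`-periodic label. With singletons in `Ē^{0,-}`, weak left-resolvingness makes paths backward
deterministic: two infinite paths with the same label that meet at some time agree at every
earlier time. Strong cofinality lets every vertex reach a tail of every infinite path.

If an infinite path returns to its source `w` after `e` steps, periodicity forces every path
from `w` to carry the label of that loop. A second loop at `w` through the vertex after the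
return, supplied by cofinality, then has the same label as the first, so backward determinism
makes the two loops start at the same vertex; by induction the vertex sequence is `e`-periodic.
Finally, cofinality splices any infinite path from `v` into a tail of any other; backward
determinism aligns the two up to an offset, which is a return to `v` and therefore a period. So
all infinite paths from `v` pass through the same vertices at the same times, and two paths from
`v` with the same label end at the same vertex.
-/

namespace Function.Periodic

variable {α : Type*} {f g : ℕ → α} {c : ℕ}

theorem apply_add_mul (hf : Periodic f c) (n k : ℕ) : f (n + k * c) = f n := by
  simpa using hf.nat_mul k n

theorem apply_mul (hf : Periodic f c) (k : ℕ) : f (k * c) = f 0 := by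
  simpa using hf.nat_mul_eq k

theorem apply_mod (hf : Periodic f c) (n : ℕ) : f (n % c) = f n := by
  conv_rhs => rw [← Nat.mod_add_div n c, mul_comm]
  exact (hf.apply_add_mul _ _).symm

theorem eq_of_forall_lt (hf : Periodic f c) (hg : Periodic g c) (hc : 0 < c)
    (h : ∀ i < c, f i = g i) : f = g :=
  funext fun n => by rw [← hf.apply_mod, ← hg.apply_mod, h _ (Nat.mod_lt n hc)]

theorem eq_of_forall_add_eq (hf : Periodic f c) (hg : Periodic g c) (hc : 0 < c) (a : ℕ)
    (h : ∀ s, f (a + s) = g (a + s)) : f = g := by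
  funext n
  obtain ⟨s, hs⟩ : ∃ s, n + a * c = a + s :=
    ⟨n + a * c - a, by have := Nat.le_mul_of_pos_right a hc; omega⟩
  rw [← hf.apply_add_mul n a, ← hg.apply_add_mul n a, hs, h]

end Function.Periodic

theorem apply_add_mul_eq_of_lt {α : Type*} {f : ℕ → α} {d M : ℕ}
    (h : ∀ i, i + d < M → f (i + d) = f i) (n k : ℕ) (hk : n + k * d < M) :
    f (n + k * d) = f n := by
  induction k with
  | zero => simp
  | succ k ih =>
    rw [add_mul, one_mul, ← add_assoc] at hk ⊢
    rw [h _ hk, ih (by omega)]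

namespace LabelledGraph

variable {V Ed A : Type*} {G : LabelledGraph V Ed A}

namespace GInfPath

def vtx (X : G.GInfPath) (n : ℕ) : V := G.src (X.edges n)

@[simp] lemma vtx_zero (X : G.GInfPath) : X.vtx 0 = X.src := rfl

lemma vtx_succ (X : G.GInfPath) (n : ℕ) : X.vtx (n + 1) = G.rng (X.edges n) := (X.chain n).symm

def shift (X : G.GInfPath) (m : ℕ) : G.GInfPath where
  edges n := X.edges (m + n)
  chain n := X.chain (m + n)

@[simp] lemma shift_edges (X : G.GInfPath) (m n : ℕ) : (X.shift m).edges n = X.edges (m + n) :=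
  rfl

@[simp] lemma shift_vtx (X : G.GInfPath) (m n : ℕ) : (X.shift m).vtx n = X.vtx (m + n) := rfl

@[simp] lemma shift_src (X : G.GInfPath) (m : ℕ) : (X.shift m).src = X.vtx m := rfl

def splice (X Y : G.GInfPath) (n : ℕ) (h : X.vtx n = Y.src) : G.GInfPath where
  edges i := if i < n then X.edges i else Y.edges (i - n)
  chain i := by
    rcases lt_trichotomy (i + 1) n with hi | rfl | hi
    · simp only [hi, Nat.lt_of_succ_lt hi, if_true]
      exact X.chain i
    · simp only [Nat.lt_succ_self, if_true, lt_irrefl, if_false, Nat.sub_self]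
      exact (X.vtx_succ i).symm.trans h
    · simp only [show ¬ i < n by omega, show ¬ i + 1 < n by omega, if_false,
        show i + 1 - n = i - n + 1 by omega]
      exact Y.chain _

section splice

variable (X Y : G.GInfPath) {n : ℕ} (h : X.vtx n = Y.src)

lemma splice_edges_of_lt {i : ℕ} (hi : i < n) : (X.splice Y n h).edges i = X.edges i :=
  if_pos hi

@[simp] lemma splice_edges_add (i : ℕ) : (X.splice Y n h).edges (n + i) = Y.edges i := by
  simp [splice]

@[simp] lemma splice_label_add (i : ℕ) : (X.splice Y n h).label (n + i) = Y.label i :=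
  congrArg G.lbl (X.splice_edges_add Y h i)

@[simp] lemma splice_vtx_add (i : ℕ) : (X.splice Y n h).vtx (n + i) = Y.vtx i :=
  congrArg G.src (X.splice_edges_add Y h i)

lemma splice_label_of_lt {i : ℕ} (hi : i < n) : (X.splice Y n h).label i = X.label i :=
  congrArg G.lbl (X.splice_edges_of_lt Y h hi)

lemma splice_vtx_of_le {i : ℕ} (hi : i ≤ n) : (X.splice Y n h).vtx i = X.vtx i := by
  rcases hi.lt_or_eq with hi | rfl
  · exact congrArg G.src (X.splice_edges_of_lt Y h hi)
  · simpa [h] using X.splice_vtx_add Y h 0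

@[simp] lemma splice_src : (X.splice Y n h).src = X.src :=
  X.splice_vtx_of_le Y h (Nat.zero_le n)

end splice

def loop (X : G.GInfPath) (e : ℕ) (he : 0 < e) (h : X.vtx e = X.src) : G.GInfPath where
  edges i := X.edges (i % e)
  chain i := by
    obtain ⟨q, r, hr, rfl⟩ : ∃ q r, r < e ∧ i = r + e * q :=
      ⟨i / e, i % e, Nat.mod_lt i he, (Nat.mod_add_div i e).symm⟩
    simp only [show r + e * q + 1 = r + 1 + e * q by ring, Nat.add_mul_mod_self_left,
      Nat.mod_eq_of_lt hr]
    rcases Nat.lt_or_eq_of_le (show r + 1 ≤ e from hr) with hlt | heq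
    · rw [Nat.mod_eq_of_lt hlt]
      exact X.chain r
    · rw [← X.vtx_succ, heq, Nat.mod_self, h]
      rfl

section loop

variable (X : G.GInfPath) {e : ℕ} (he : 0 < e) (h : X.vtx e = X.src)

@[simp] lemma loop_edges (i : ℕ) : (X.loop e he h).edges i = X.edges (i % e) := rfl

@[simp] lemma loop_src : (X.loop e he h).src = X.src := by
  simp [GInfPath.src]

lemma periodic_loop_vtx : Function.Periodic (X.loop e he h).vtx e := fun i => by
  simp [vtx]

end loop

def take (X : G.GInfPath) (n : ℕ) (hn : n ≠ 0) : G.GPath where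
  edges := List.ofFn fun i : Fin n => X.edges i
  ne := by simpa using hn
  chain := List.isChain_iff_getElem.2 fun i hi => by
    simpa using X.chain i

lemma vtx_mem_relRange (X : G.GInfPath) {S : Set V} (hS : X.src ∈ S) {n : ℕ} (hn : n ≠ 0) :
    X.vtx n ∈ G.relRange S (finTake X.label n) := by
  refine ⟨X.take n hn, ?_, ?_, ?_⟩
  · simp only [take, GPath.label, finTake, List.map_ofFn]
    rfl
  · simp only [take, GPath.src, List.head_ofFn]
    exact hS
  · obtain ⟨m, rfl⟩ := Nat.exists_eq_add_of_lt (Nat.pos_of_ne_zero hn)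
    simp only [take, GPath.rng, List.getLast_ofFn]
    exact (X.vtx_succ _).symm

end GInfPath

namespace GPath

def comp (p : G.GPath) (X : G.GInfPath) (h : p.rng = X.src) : G.GInfPath where
  edges i := if hi : i < p.edges.length then p.edges[i] else X.edges (i - p.edges.length)
  chain i := by
    rcases lt_trichotomy (i + 1) p.edges.length with hi | hi | hi
    · simp only [hi, Nat.lt_of_succ_lt hi, dif_pos]
      exact p.chain.getElem i hi
    · have hi' : i < p.edges.length := by omega
      simp only [hi', dif_pos, hi, lt_irrefl, dif_neg, not_false_eq_true, Nat.sub_self]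
      show _ = X.src
      rw [← h, GPath.rng, List.getLast_eq_getElem]
      simp only [← hi, Nat.add_sub_cancel]
    · simp only [show ¬ i < p.edges.length by omega, show ¬ i + 1 < p.edges.length by omega,
        dif_neg, not_false_eq_true, show i + 1 - p.edges.length = i - p.edges.length + 1 by omega]
      exact X.chain _

section comp

variable (p : G.GPath) (X : G.GInfPath) (h : p.rng = X.src)

@[simp] lemma comp_edges_add (i : ℕ) : (p.comp X h).edges (p.len + i) = X.edges i := by
  simp [comp, GPath.len]

@[simp] lemma comp_src : (p.comp X h).src = p.src := by
  simp [comp, GInfPath.src, GPath.src, List.head_eq_getElem, List.length_pos_iff.2 p.ne]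

lemma comp_vtx_len : (p.comp X h).vtx p.len = p.rng := by
  rw [h, ← add_zero p.len]
  exact congrArg G.src (p.comp_edges_add X h 0)

end comp

end GPath

open GInfPath

lemma exists_src_eq (hns : ∀ u : V, ∃ e : Ed, G.src e = u) (w : V) :
    ∃ X : G.GInfPath, X.src = w := by
  choose f hf using hns
  let edges : ℕ → Ed := fun n => Nat.rec (motive := fun _ => Ed) (f w) (fun _ e => f (G.rng e)) n
  exact ⟨⟨edges, fun n => (hf _).symm⟩, hf w⟩

lemma mem_genVertex_self (k : ℕ) (u : V) : u ∈ G.genVertex k u := rfl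

lemma exists_genVertex_eq_singleton (hsing : ∀ w : V, ({w} : Set V) ∈ G.barE) (u : V) :
    ∃ k, 1 ≤ k ∧ G.genVertex k u = {u} := by
  obtain ⟨k, F, hk, hF⟩ := hsing u
  have hu : u ∈ ⋃ w ∈ F, G.genVertex k w := hF ▸ rfl
  obtain ⟨w, hwF, huw⟩ := Set.mem_iUnion₂.1 hu
  have hcls : G.genVertex k u = G.genVertex k w := by
    ext z
    exact iff_of_eq (congrArg (G.labelsToVtx k z = ·) huw)
  refine ⟨k, hk, Set.Subset.antisymm (fun z hz => ?_) (Set.singleton_subset_iff.2 rfl)⟩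
  rw [hF]
  exact Set.mem_iUnion₂.2 ⟨w, hwF, hcls ▸ hz⟩

namespace GInfPath

variable (hwlr : G.WeaklyLeftResolving G.barE) (hsing : ∀ w : V, ({w} : Set V) ∈ G.barE)
include hwlr hsing

theorem src_eq_of_label_eq {X Y : G.GInfPath} (hlab : X.label = Y.label) {n : ℕ}
    (hn : X.vtx n = Y.vtx n) : X.src = Y.src := by
  rcases Nat.eq_zero_or_pos n with rfl | hpos
  · exact hn
  have hX := X.vtx_mem_relRange (Set.mem_singleton X.src) hpos.ne'
  have hY := Y.vtx_mem_relRange (Set.mem_singleton Y.src) hpos.ne'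
  rw [← hn, ← hlab] at hY
  have hmem := Set.mem_inter hX hY
  obtain ⟨p, hp, -⟩ := hX
  rw [hwlr _ (hsing X.src) _ (hsing Y.src) _ ⟨p, hp⟩] at hmem
  obtain ⟨q, -, ⟨hqX, hqY⟩, -⟩ := hmem
  exact hqX.symm.trans hqY

theorem vtx_eq_of_label_eq {X Y : G.GInfPath} (hlab : X.label = Y.label) {n : ℕ}
    (hn : X.vtx n = Y.vtx n) {i : ℕ} (hi : i ≤ n) : X.vtx i = Y.vtx i :=
  src_eq_of_label_eq hwlr hsing (X := X.shift i) (Y := Y.shift i)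
    (funext fun k => congrFun hlab (i + k)) (n := n - i)
    (by simpa [Nat.add_sub_cancel' hi] using hn)

end GInfPath

section Cofinal

variable (hsc : G.StronglyCofinal) (hsing : ∀ w : V, ({w} : Set V) ∈ G.barE)
include hsc hsing

theorem exists_edges_add_eq (R : G.GInfPath) (u : V) :
    ∃ Q : G.GInfPath, Q.src = u ∧ ∃ k N, ∀ s, Q.edges (k + s) = R.edges (N + s) := by
  obtain ⟨m, hm, hmu⟩ := exists_genVertex_eq_singleton hsing u
  obtain ⟨N, hN, _, lds, -, hcov⟩ := hsc R.label ⟨R, rfl⟩ m hm u R.src ⟨R, rfl, rfl⟩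
  obtain ⟨-, B, -, hBu, hBN⟩ :=
    Set.mem_iUnion.1 (hcov (R.vtx_mem_relRange (mem_genVertex_self 1 R.src) (by omega)))
  rw [hmu] at hBu
  exact ⟨B.comp (R.shift N) hBN, (B.comp_src _ _).trans hBu, B.len, N, B.comp_edges_add _ _⟩

theorem exists_vtx_eq_src {C : G.GInfPath} {e : ℕ} (he : 0 < e)
    (hC : Function.Periodic C.vtx e) (u : V) :
    ∃ Q : G.GInfPath, Q.src = u ∧ ∃ m, Q.vtx m = C.src := by
  obtain ⟨Q, hQ, k, N, hQC⟩ := exists_edges_add_eq hsc hsing C u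
  obtain ⟨e, rfl⟩ := Nat.exists_eq_succ_of_ne_zero he.ne'
  refine ⟨Q, hQ, k + N * e, ?_⟩
  calc Q.vtx (k + N * e) = C.vtx (N * (e + 1)) := by
        simp only [GInfPath.vtx, hQC]
        ring_nf
    _ = C.src := hC.apply_mul N

end Cofinal

variable (G) in
def LabelPeriodicAt (L : ℕ) (w : V) : Prop :=
  ∀ X : G.GInfPath, X.src = w → Function.Periodic X.label L

namespace LabelPeriodicAt

variable {L : ℕ} {w : V}

theorem vtx (hw : G.LabelPeriodicAt L w) {X : G.GInfPath} (hX : X.src = w) (n : ℕ) :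
    G.LabelPeriodicAt L (X.vtx n) := fun Y hY s => by
  have hZ := hw (X.splice Y n hY.symm) ((splice_src _ _ _).trans hX) (n + s)
  simpa only [add_assoc, splice_label_add] using hZ

theorem label_eq_of_return (hw : G.LabelPeriodicAt L w) (hL : 0 < L) {Θ : G.GInfPath}
    (hΘ : Θ.src = w) {e : ℕ} (he : 0 < e) (hret : Θ.vtx e = w) {X Y : G.GInfPath}
    (hX : X.src = w) (hY : Y.src = w) : X.label = Y.label := by
  set C := Θ.loop e he (hret.trans hΘ.symm)
  have hC : C.src = w := (loop_src _ _ _).trans hΘ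
  have hCe : Function.Periodic C.label e := fun i => by simp [C, GInfPath.label]
  -- `L * e` steps around `C` followed by `Z` is a path from `w` whose label agrees with that of
  -- `C` on the first `L` letters, hence everywhere.
  have key : ∀ Z : G.GInfPath, Z.src = w → Z.label = C.label := fun Z hZ => by
    have hCZ : C.vtx (L * e) = Z.src := by
      rw [(periodic_loop_vtx _ _ _).apply_mul, vtx_zero, hC, hZ]
    have hspl : (C.splice Z (L * e) hCZ).label = C.label :=
      (hw _ ((splice_src _ _ _).trans hC)).eq_of_forall_lt (hw C hC) hL fun i hi =>
        splice_label_of_lt _ _ _ (lt_of_lt_of_le hi (Nat.le_mul_of_pos_right L he))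
    funext n
    rw [← splice_label_add C Z hCZ, hspl, add_comm, hCe.apply_add_mul]
  rw [key X hX, key Y hY]

end LabelPeriodicAt

theorem Agreeable.exists_getElem_add_eq {l : ℕ} {α : List A} (h : G.Agreeable l α) :
    ∃ d, 0 < d ∧ d ≤ l ∧ ∀ i (hi : i + d < α.length), α[i + d] = α[i] := by
  obtain ⟨β, α', γ, ⟨p, rfl⟩, -, -, hlen, hle, h1, h2⟩ := h
  refine ⟨p.label.length, by simpa [GPath.label] using List.length_pos_iff.2 p.ne, hle,
    fun i hi => ?_⟩
  have hα' : i < α'.length := by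
    have := congrArg List.length h1
    simp only [List.length_append] at this
    omega
  rw [List.getElem_of_eq h1, List.getElem_append_right (by omega), List.getElem_of_eq h2,
    List.getElem_append_left hα']
  simp

theorem exists_agreeable_finTake {l : ℕ} {v : V} (h : ¬ G.DisagreeableVtx l v) :
    ∃ n₀, ∀ X : G.GInfPath, X.src = v → ∀ M, n₀ ≤ M → G.Agreeable l (finTake X.label M) := by
  have : ¬ ∀ n, 1 < n → ∃ α : List A, n ≤ α.length ∧ G.DisagreeablePath l v α :=
    fun hall => h ⟨1, one_pos, hall⟩
  simp only [not_forall, not_exists, not_and] at this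
  obtain ⟨n₀, hn₀, hagr⟩ := this
  refine ⟨n₀, fun X hX M hM => by_contra fun hna =>
    hagr _ (by simpa [finTake] using hM) ⟨?_, ?_, hna⟩⟩
  · obtain ⟨p, hp, -⟩ := X.vtx_mem_relRange (Set.mem_singleton _) (n := M) (by omega)
    exact ⟨p, hp⟩
  · obtain ⟨p, hp, hpX, -⟩ := X.vtx_mem_relRange (Set.mem_singleton _) (n := M) (by omega)
    exact ⟨v, ⟨p, hp, hpX.trans hX⟩, mem_genVertex_self l v⟩

theorem labelPeriodicAt_factorial_of_not_disagreeableVtx {l : ℕ} {v : V}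
    (h : ¬ G.DisagreeableVtx l v) : G.LabelPeriodicAt l.factorial v := by
  obtain ⟨n₀, hagr⟩ := exists_agreeable_finTake h
  intro X hX n
  set M := n + l.factorial + n₀ + 1
  obtain ⟨d, hd, hdl, hper⟩ := (hagr X hX M (by omega)).exists_getElem_add_eq
  have hstep : ∀ i, i + d < M → X.label (i + d) = X.label i := fun i hi => by
    simpa only [finTake, List.getElem_ofFn] using
      hper i (by rw [finTake, List.length_ofFn]; exact hi)
  obtain ⟨k, hk⟩ := Nat.dvd_factorial hd hdl
  rw [hk, mul_comm]
  exact apply_add_mul_eq_of_lt hstep n k (by rw [mul_comm, ← hk]; omega)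

section Return

variable (hwlr : G.WeaklyLeftResolving G.barE) (hsc : G.StronglyCofinal)
  (hsing : ∀ w : V, ({w} : Set V) ∈ G.barE) {L : ℕ} (hL : 0 < L)
include hwlr hsc hsing hL

theorem vtx_add_one_eq_of_return {w : V} (hw : G.LabelPeriodicAt L w) {Θ : G.GInfPath}
    (hΘ : Θ.src = w) {e : ℕ} (he : 0 < e) (hret : Θ.vtx e = w) :
    Θ.vtx (e + 1) = Θ.vtx 1 := by
  have hΘe : Θ.vtx e = Θ.src := hret.trans hΘ.symm
  set C := Θ.loop e he hΘe
  have hC : C.src = w := (loop_src _ _ _).trans hΘ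
  obtain ⟨Q, hQ, m, hQm⟩ :=
    exists_vtx_eq_src hsc hsing he (periodic_loop_vtx Θ he hΘe) (Θ.vtx (e + 1))
  set D := (Θ.shift e).splice Q 1 hQ.symm
  have hD : D.src = w := (splice_src _ _ _).trans hret
  have hDret : D.vtx (1 + m) = D.src :=
    (splice_vtx_add _ _ _ m).trans (hQm.trans (hC.trans hD.symm))
  set C₂ := D.loop (1 + m) (by omega) hDret
  have hC₂ : C₂.src = w := (loop_src _ _ _).trans hD
  -- `C` starts with the edge `Θ.edges 0` and `C₂` with `Θ.edges e`: two loops at `w` with the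
  -- same label, both back at `w` at time `(1 + m) * e`.
  have hlab : C.label = C₂.label := hw.label_eq_of_return hL hΘ he hret hC hC₂
  have hM : C.vtx ((1 + m) * e) = C₂.vtx ((1 + m) * e) := by
    rw [(periodic_loop_vtx _ _ _).apply_mul, mul_comm, (periodic_loop_vtx _ _ _).apply_mul,
      vtx_zero, vtx_zero, hC, hC₂]
  have h1 := vtx_eq_of_label_eq hwlr hsing hlab hM (i := 1) (Nat.mul_pos (by omega) he)
  have hC0 : C.edges 0 = Θ.edges 0 := by simp only [C, loop_edges, Nat.zero_mod]
  have hC₂0 : C₂.edges 0 = Θ.edges e := by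
    simp only [C₂, loop_edges, Nat.zero_mod]
    exact splice_edges_of_lt _ _ _ one_pos
  calc Θ.vtx (e + 1) = G.rng (C₂.edges 0) := by rw [hC₂0, vtx_succ]
    _ = C.vtx 1 := (C₂.vtx_succ 0).symm.trans h1.symm
    _ = G.rng (C.edges 0) := C.vtx_succ 0
    _ = Θ.vtx 1 := by rw [hC0]; exact (Θ.vtx_succ 0).symm

theorem periodic_vtx_of_return {w : V} (hw : G.LabelPeriodicAt L w) {Θ : G.GInfPath}
    (hΘ : Θ.src = w) {e : ℕ} (he : 0 < e) (hret : Θ.vtx e = w) :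
    Function.Periodic Θ.vtx e := by
  intro s
  induction s with
  | zero => simpa [hΘ] using hret
  | succ s ih =>
    have := vtx_add_one_eq_of_return hwlr hsc hsing hL (hw.vtx hΘ s) (Θ.shift_src s) he
      (by simpa using ih)
    simpa [add_assoc, add_comm 1 e] using this

theorem vtx_eq_of_edges_add_eq {v : V} (hv : G.LabelPeriodicAt L v) {X Y : G.GInfPath}
    (hX : X.src = v) (hY : Y.src = v) {a b : ℕ} (hab : a ≤ b)
    (h : ∀ s, X.edges (a + s) = Y.edges (b + s)) (n : ℕ) : X.vtx n = Y.vtx n := by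
  obtain ⟨e, rfl⟩ := Nat.exists_eq_add_of_le hab
  have hXY : ∀ s, X.edges (a + s) = (Y.shift e).edges (a + s) := fun s => by
    rw [h, shift_edges, add_left_comm, add_assoc]
  have hlab : X.label = (Y.shift e).label :=
    (hv X hX).eq_of_forall_add_eq (hv.vtx hY e _ rfl) hL a fun s => congrArg G.lbl (hXY s)
  have hvtx : ∀ i, X.vtx i = Y.vtx (e + i) := fun i =>
    vtx_eq_of_label_eq hwlr hsing hlab (congrArg G.src (hXY i)) (Nat.le_add_left i a)
  rcases Nat.eq_zero_or_pos e with rfl | he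
  · simpa using hvtx n
  · have hret : Y.vtx e = v := by simpa [hX] using (hvtx 0).symm
    rw [hvtx, add_comm, periodic_vtx_of_return hwlr hsc hsing hL hv hY he hret]

theorem vtx_eq_of_src_eq {v : V} (hv : G.LabelPeriodicAt L v) {R S : G.GInfPath}
    (hR : R.src = v) (hS : S.src = v) (n : ℕ) : R.vtx n = S.vtx n := by
  obtain ⟨Q, hQ, k, N, hQR⟩ := exists_edges_add_eq hsc hsing R (S.vtx n)
  set Θ := S.splice Q n hQ.symm
  have hΘ : Θ.src = v := (splice_src _ _ _).trans hS
  have hΘR : ∀ s, Θ.edges (n + k + s) = R.edges (N + s) := fun s => by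
    rw [add_assoc, splice_edges_add, hQR]
  rw [← splice_vtx_of_le S Q hQ.symm le_rfl]
  rcases le_total (n + k) N with hle | hle
  · exact (vtx_eq_of_edges_add_eq hwlr hsc hsing hL hv hΘ hR hle hΘR n).symm
  · exact vtx_eq_of_edges_add_eq hwlr hsc hsing hL hv hR hΘ hle (fun s => (hΘR s).symm) n

theorem GPath.rng_eq_of_src_eq (hns : ∀ u : V, ∃ e : Ed, G.src e = u) {v : V}
    (hv : G.LabelPeriodicAt L v) {p q : G.GPath} (hp : p.src = v) (hq : q.src = v)
    (hpq : p.len = q.len) : p.rng = q.rng := by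
  obtain ⟨X, hX⟩ := exists_src_eq hns p.rng
  obtain ⟨Y, hY⟩ := exists_src_eq hns q.rng
  calc p.rng = (p.comp X hX.symm).vtx p.len := (p.comp_vtx_len _ _).symm
    _ = (q.comp Y hY.symm).vtx q.len := by
      rw [hpq]
      exact vtx_eq_of_src_eq hwlr hsc hsing hL hv ((p.comp_src _ _).trans hp)
        ((q.comp_src _ _).trans hq) q.len
    _ = q.rng := q.comp_vtx_len _ _

end Return

end LabelledGraph

theorem not_disagreeable_implies_singleton_relRange_general
    {V Ed A : Type*} (G : LabelledGraph V Ed A)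
    (hwlr : G.WeaklyLeftResolving G.barE)
    (hsa : G.StandingAssumptions G.barE)
    (hsc : G.StronglyCofinal)
    (hsing : ∀ w : V, ({w} : Set V) ∈ G.barE)
    (v : V) (l : ℕ)
    (h : ¬ G.DisagreeableVtx l v) :
    ∀ α : List A, (∃ p : G.GPath, p.label = α ∧ p.src = v) →
      ∃ w : V, G.relRange {v} α = {w} := by
  rintro α ⟨p, rfl, hp⟩
  refine ⟨p.rng, Set.eq_singleton_iff_unique_mem.2 ⟨⟨p, rfl, hp, rfl⟩, ?_⟩⟩
  rintro _ ⟨q, hqp, hq, rfl⟩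
  refine LabelledGraph.GPath.rng_eq_of_src_eq hwlr hsc hsing l.factorial_pos hsa.no_sinks
    (LabelledGraph.labelPeriodicAt_factorial_of_not_disagreeableVtx h) hq hp ?_
  simpa [LabelledGraph.GPath.label, LabelledGraph.GPath.len] using congrArg List.length hqp

/-- In a weakly left-resolving, strongly cofinal labelled space
`(E,𝓛,Ē^{0,-})` with all singletons in `Ē^{0,-}`, if `[v]_l` is not disagreeable
then `|r({v},α)| = 1` for every `α ∈ 𝓛(vE^{≥1})`. -/
theorem not_disagreeable_implies_singleton_relRange
    {V Ed A : Type*} [Countable A] (G : LabelledGraph V Ed A)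
    (hacc : G.Accommodating G.barE)
    (hwlr : G.WeaklyLeftResolving G.barE)
    (hsa : G.StandingAssumptions G.barE)
    (hsc : G.StronglyCofinal)
    (hsing : ∀ w : V, ({w} : Set V) ∈ G.barE)
    (v : V) (l : ℕ) (hl : 1 ≤ l)
    (h : ¬ G.DisagreeableVtx l v) :
    ∀ α : List A, (∃ p : G.GPath, p.label = α ∧ p.src = v) →
      ∃ w : V, G.relRange {v} α = {w} :=
  not_disagreeable_implies_singleton_relRange_general G hwlr hsa hsc hsing v l h
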